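/- Let (R, ⊕, ·) be a fully idempotent semihyperring and {ηᵢ}_{i ∈ I} an arbitrary family of fuzzy hyperideals of R. Then ⋃_{i ∈ I} O_{ηᵢ} = O_{Σ_{i ∈ I} ηᵢ}, where the sum Σ_{i ∈ I} ηᵢ is the fuzzy hyperideal defined by (Σᵢ ηᵢ)(x) = sup of min_{1 ≤ k ≤ p} η_{i_k}(x_k), the supremum taken over all p ≥ 1, indices i₁, …, iₚ ∈ I, and x₁, …, xₚ ∈ R with x ∈ x₁ ⊕ ⋯ ⊕ xₚ. -/

import Mathlib

/-- The unit interval `[0,1]` is a complete lattice. -/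
noncomputable instance : Fact ((0:ℝ) ≤ 1) := ⟨zero_le_one⟩

/-- A semihyperring `(R, ⊕, ·)`: a hyperoperation `hadd` (with nonempty values),
a binary multiplication `mul`, and an element `zero`, satisfying commutativity and
(extended) associativity of `⊕`, associativity of `·`, two-sided distributivity of
`·` over `⊕` (as sets), and `0 ⊕ x = {x}`, `0·x = 0 = x·0`. -/
class Semihyperring (R : Type*) where
  hadd : R → R → Set R
  mul : R → R → R
  zero : R
  hadd_nonempty : ∀ x y : R, (hadd x y).Nonempty
  hadd_comm : ∀ x y : R, hadd x y = hadd y x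
  hadd_assoc : ∀ x y z : R, (⋃ w ∈ hadd y z, hadd x w) = ⋃ w ∈ hadd x y, hadd w z
  mul_assoc : ∀ x y z : R, mul (mul x y) z = mul x (mul y z)
  left_distrib : ∀ x y z : R, (fun w => mul x w) '' hadd y z = hadd (mul x y) (mul x z)
  right_distrib : ∀ x y z : R, (fun w => mul w z) '' hadd x y = hadd (mul x z) (mul y z)
  zero_hadd : ∀ x : R, hadd zero x = {x}
  hadd_zero : ∀ x : R, hadd x zero = {x}
  zero_mul : ∀ x : R, mul zero x = zero
  mul_zero : ∀ x : R, mul x zero = zero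

namespace Semihyperring

variable {R : Type*} [Semihyperring R]

/-- The hyperoperation `⊕` extended to subsets: `A ⊕ B = ⋃ {a ⊕ b : a ∈ A, b ∈ B}`. -/
def haddSet (A B : Set R) : Set R := ⋃ a ∈ A, ⋃ b ∈ B, hadd a b

/-- The hypersum `x₁ ⊕ x₂ ⊕ ⋯ ⊕ xₚ` of a list of elements (the empty hypersum is `{0}`,
which is neutral since `0 ⊕ x = {x}`). -/
def hsumList : List R → Set R
  | [] => {zero}
  | x :: xs => haddSet {x} (hsumList xs)

/-- A (two-sided) hyperideal: a nonempty subset closed under `⊕` and under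
multiplication by arbitrary elements of `R` on both sides. -/
def IsHyperideal (I : Set R) : Prop :=
  I.Nonempty ∧ (∀ x ∈ I, ∀ y ∈ I, hadd x y ⊆ I) ∧
    (∀ r : R, ∀ x ∈ I, mul r x ∈ I ∧ mul x r ∈ I)

/-- A right hyperideal. -/
def IsRightHyperideal (I : Set R) : Prop :=
  I.Nonempty ∧ (∀ x ∈ I, ∀ y ∈ I, hadd x y ⊆ I) ∧ (∀ x ∈ I, ∀ r : R, mul x r ∈ I)

/-- A left hyperideal. -/
def IsLeftHyperideal (I : Set R) : Prop :=
  I.Nonempty ∧ (∀ x ∈ I, ∀ y ∈ I, hadd x y ⊆ I) ∧ (∀ x ∈ I, ∀ r : R, mul r x ∈ I)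

/-- The product of two subsets:
`AB = {x : x ∈ a₁b₁ ⊕ ⋯ ⊕ aₚbₚ for some p ≥ 1, aᵢ ∈ A, bᵢ ∈ B}`. -/
def setProd (A B : Set R) : Set R :=
  {x | ∃ l : List (R × R), l ≠ [] ∧ (∀ p ∈ l, p.1 ∈ A ∧ p.2 ∈ B) ∧
    x ∈ hsumList (l.map fun p => mul p.1 p.2)}

/-- `R` is fully idempotent if every hyperideal `I` satisfies `I² = I`. -/
def FullyIdempotent (R : Type*) [Semihyperring R] : Prop :=
  ∀ I : Set R, IsHyperideal I → setProd I I = I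

/-- `R` is (von Neumann) regular if every `x` satisfies `x = x·a·x` for some `a`. -/
def Regular (R : Type*) [Semihyperring R] : Prop :=
  ∀ x : R, ∃ a : R, x = mul (mul x a) x

/-- A fuzzy hyperideal of `R`: a function `μ : R → [0,1]` with
`inf {μ z : z ∈ x ⊕ y} ≥ min (μ x) (μ y)` and `μ (x·y) ≥ max (μ x) (μ y)`. -/
def IsFuzzyHyperideal (μ : R → unitInterval) : Prop :=
  (∀ x y : R, μ x ⊓ μ y ≤ ⨅ z ∈ hadd x y, μ z) ∧
  (∀ x y : R, μ x ⊔ μ y ≤ μ (mul x y))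

/-- A fuzzy right hyperideal: `inf {λ z : z ∈ x ⊕ y} ≥ min (λ x) (λ y)` and `λ (x·y) ≥ λ x`. -/
def IsFuzzyRightHyperideal (μ : R → unitInterval) : Prop :=
  (∀ x y : R, μ x ⊓ μ y ≤ ⨅ z ∈ hadd x y, μ z) ∧
  (∀ x y : R, μ x ≤ μ (mul x y))

/-- A fuzzy left hyperideal: `inf {λ z : z ∈ x ⊕ y} ≥ min (λ x) (λ y)` and `λ (x·y) ≥ λ y`. -/
def IsFuzzyLeftHyperideal (μ : R → unitInterval) : Prop :=
  (∀ x y : R, μ x ⊓ μ y ≤ ⨅ z ∈ hadd x y, μ z) ∧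
  (∀ x y : R, μ y ≤ μ (mul x y))

/-- The product `λμ` of fuzzy subsets:
`(λμ)(x) = ⋁ { ⋀_{1≤i≤p} (λ yᵢ ⊓ μ zᵢ) : p ≥ 1, x ∈ y₁z₁ ⊕ ⋯ ⊕ yₚzₚ }`. -/
noncomputable def fprod (lam mu : R → unitInterval) (x : R) : unitInterval :=
  sSup {t | ∃ l : List (R × R), l ≠ [] ∧
    x ∈ hsumList (l.map fun p => mul p.1 p.2) ∧
    t = ⨅ p ∈ l, lam p.1 ⊓ mu p.2}

/-- The sum `λ ⊕ μ` of fuzzy subsets: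
`(λ ⊕ μ)(x) = ⋁ { λ y ⊓ μ z : x ∈ y ⊕ z }`. -/
noncomputable def fsum (lam mu : R → unitInterval) (x : R) : unitInterval :=
  sSup {t | ∃ y z : R, x ∈ hadd y z ∧ t = lam y ⊓ mu z}

/-- The composition `λ ∘ μ` of fuzzy subsets:
`(λ ∘ μ)(x) = ⋁ { λ y ⊓ μ z : x = y·z }` (with `⋁ ∅ = 0`). -/
noncomputable def fcomp (lam mu : R → unitInterval) (x : R) : unitInterval :=
  sSup {t | ∃ y z : R, x = mul y z ∧ t = lam y ⊓ mu z}

/-- A fuzzy prime hyperideal: a fuzzy hyperideal `η` such that for all fuzzy hyperideals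
`λ, μ`, `λμ ≤ η` implies `λ ≤ η` or `μ ≤ η`. -/
def IsFuzzyPrimeHyperideal (η : R → unitInterval) : Prop :=
  IsFuzzyHyperideal η ∧ ∀ lam mu : R → unitInterval, IsFuzzyHyperideal lam →
    IsFuzzyHyperideal mu → fprod lam mu ≤ η → lam ≤ η ∨ mu ≤ η

/-- A fuzzy irreducible hyperideal: a fuzzy hyperideal `η` such that for all fuzzy
hyperideals `λ, μ`, `min (λ, μ) = η` (pointwise) implies `λ = η` or `μ = η`. -/
def IsFuzzyIrreducibleHyperideal (η : R → unitInterval) : Prop :=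
  IsFuzzyHyperideal η ∧ ∀ lam mu : R → unitInterval, IsFuzzyHyperideal lam →
    IsFuzzyHyperideal mu → lam ⊓ mu = η → lam = η ∨ mu = η

/-- `FP R`: the set of proper fuzzy prime hyperideals of `R`
(`η` is proper if it is not the constant function `1`). -/
def FP (R : Type*) [Semihyperring R] : Set (R → unitInterval) :=
  {η | IsFuzzyPrimeHyperideal η ∧ η ≠ fun _ => 1}

/-- `O λ = {μ ∈ FP R : λ ≰ μ}`. -/
def O (lam : R → unitInterval) : Set (R → unitInterval) :=
  {mu ∈ FP R | ¬ lam ≤ mu}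

/-- The sum `Σᵢ ηᵢ` of an arbitrary family of fuzzy subsets:
`(Σᵢ ηᵢ)(x) = ⋁ { ⋀_{1≤k≤p} η_{i_k} (x_k) : p ≥ 1, x ∈ x₁ ⊕ ⋯ ⊕ xₚ }`. -/
noncomputable def famSum {ι : Type*} (η : ι → R → unitInterval) (x : R) : unitInterval :=
  sSup {t | ∃ l : List (ι × R), l ≠ [] ∧ x ∈ hsumList (l.map Prod.snd) ∧
    t = ⨅ p ∈ l, η p.1 p.2}

end Semihyperring

/-! A fuzzy subset `μ` with `μ x ⊓ μ y ≤ μ z` for `z ∈ x ⊕ y` is bounded below on a hypersum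
`x₁ ⊕ ⋯ ⊕ xₚ` by `min μ(xₖ)`. Hence `Σᵢ ηᵢ ≤ μ` exactly when every `ηᵢ ≤ μ`, so for fuzzy
hyperideals `μ`, `Σᵢ ηᵢ ≰ μ` iff some `ηᵢ ≰ μ`. That `Σᵢ ηᵢ` is a fuzzy hyperideal follows by
concatenating hypersums and by distributivity, which carries `x ∈ x₁ ⊕ ⋯ ⊕ xₚ` to
`x·y ∈ x₁y ⊕ ⋯ ⊕ xₚy` and to `y·x ∈ yx₁ ⊕ ⋯ ⊕ yxₚ`. -/

theorem biInf_list_map {α β L : Type*} [CompleteLattice L] (g : α → β) (f : β → L)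
    (l : List α) : ⨅ b ∈ l.map g, f b = ⨅ a ∈ l, f (g a) := by
  simpa using iInf_image (f := g) (t := {a | a ∈ l}) (g := f)

namespace Semihyperring

variable {R : Type*} [Semihyperring R]

theorem mem_haddSet {A B : Set R} {x : R} :
    x ∈ haddSet A B ↔ ∃ a ∈ A, ∃ b ∈ B, x ∈ hadd a b := by
  simp [haddSet]

theorem haddSet_assoc (A B C : Set R) :
    haddSet A (haddSet B C) = haddSet (haddSet A B) C := by
  ext x
  simp only [mem_haddSet]
  constructor
  · rintro ⟨a, ha, w, ⟨b, hb, c, hc, hw⟩, hx⟩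
    have : x ∈ ⋃ w ∈ hadd a b, hadd w c := hadd_assoc a b c ▸ Set.mem_biUnion hw hx
    obtain ⟨v, hv, hxv⟩ := Set.mem_iUnion₂.1 this
    exact ⟨v, ⟨a, ha, b, hb, hv⟩, c, hc, hxv⟩
  · rintro ⟨w, ⟨a, ha, b, hb, hw⟩, c, hc, hx⟩
    have : x ∈ ⋃ w ∈ hadd b c, hadd a w := (hadd_assoc a b c).symm ▸ Set.mem_biUnion hw hx
    obtain ⟨v, hv, hxv⟩ := Set.mem_iUnion₂.1 this
    exact ⟨a, ha, v, ⟨b, hb, c, hc, hv⟩, hxv⟩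

theorem hsumList_cons (a : R) (L : List R) :
    hsumList (a :: L) = ⋃ w ∈ hsumList L, hadd a w := by
  simp [hsumList, haddSet]

@[simp]
theorem hsumList_singleton (a : R) : hsumList [a] = {a} := by
  simp [hsumList, haddSet, hadd_zero]

theorem hsumList_append (A B : List R) :
    hsumList (A ++ B) = haddSet (hsumList A) (hsumList B) := by
  induction A with
  | nil => simp [hsumList, haddSet, zero_hadd]
  | cons a A ih => rw [List.cons_append, hsumList, ih, hsumList, haddSet_assoc]

def IsHaddHom (f : R → R) : Prop :=
  f zero = zero ∧ ∀ a b : R, f '' hadd a b = hadd (f a) (f b)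

theorem isHaddHom_mul_left (x : R) : IsHaddHom (mul x) :=
  ⟨mul_zero x, left_distrib x⟩

theorem isHaddHom_mul_right (y : R) : IsHaddHom (fun w => mul w y) :=
  ⟨zero_mul y, fun a b => right_distrib a b y⟩

theorem IsHaddHom.image_hsumList {f : R → R} (hf : IsHaddHom f) (L : List R) :
    f '' hsumList L = hsumList (L.map f) := by
  induction L with
  | nil => simp [hsumList, hf.1]
  | cons a L ih =>
    rw [List.map_cons, hsumList_cons, hsumList_cons, ← ih, Set.image_iUnion₂,
      Set.biUnion_image]
    exact Set.iUnion₂_congr fun w _ => hf.2 a w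

theorem biInf_le_of_mem_hsumList {L : Type*} [CompleteLattice L] {μ : R → L}
    (hμ : ∀ x y : R, μ x ⊓ μ y ≤ ⨅ z ∈ hadd x y, μ z) :
    ∀ {l : List R}, l ≠ [] → ∀ x ∈ hsumList l, ⨅ a ∈ l, μ a ≤ μ x
  | [a], _, x, hx => by simp_all
  | a :: b :: l, _, x, hx => by
    obtain ⟨w, hw, hxw⟩ := Set.mem_iUnion₂.1 ((hsumList_cons a (b :: l)) ▸ hx)
    calc ⨅ p ∈ a :: b :: l, μ p = μ a ⊓ ⨅ p ∈ b :: l, μ p := by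
          simp only [List.mem_cons, iInf_or, iInf_inf_eq, iInf_iInf_eq_left]
      _ ≤ μ a ⊓ μ w := inf_le_inf_left _ (biInf_le_of_mem_hsumList hμ (by simp) w hw)
      _ ≤ μ x := (hμ a w).trans (iInf₂_le x hxw)

section famSum

variable {ι : Type*} {η : ι → R → unitInterval}

theorem biInf_le_famSum {l : List (ι × R)} {x : R} (hl : l ≠ [])
    (hx : x ∈ hsumList (l.map Prod.snd)) : ⨅ p ∈ l, η p.1 p.2 ≤ famSum η x :=
  le_sSup ⟨l, hl, hx, rfl⟩

theorem famSum_le {x : R} {t : unitInterval}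
    (h : ∀ l : List (ι × R), l ≠ [] → x ∈ hsumList (l.map Prod.snd) → ⨅ p ∈ l, η p.1 p.2 ≤ t) :
    famSum η x ≤ t :=
  sSup_le fun _ ⟨l, hl, hx, ht⟩ => ht ▸ h l hl hx

theorem le_famSum (η : ι → R → unitInterval) (i : ι) : η i ≤ famSum η := fun x =>
  le_of_eq_of_le (by simp) (biInf_le_famSum (l := [(i, x)]) (by simp) (by simp))

theorem famSum_inf_le_hadd (η : ι → R → unitInterval) (x y : R) :
    famSum η x ⊓ famSum η y ≤ ⨅ z ∈ hadd x y, famSum η z := by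
  refine le_iInf₂ fun z hz => ?_
  rw [famSum, famSum, sSup_inf_sSup]
  refine iSup₂_le fun _ ⟨⟨l₁, hl₁, hx, h₁⟩, l₂, _, hy, h₂⟩ => ?_
  refine le_of_eq_of_le ?_ (biInf_le_famSum (l := l₁ ++ l₂) (by simp [hl₁]) ?_)
  · simp only [h₁, h₂, List.mem_append, iInf_or, iInf_inf_eq]
  · rw [List.map_append, hsumList_append]
    exact mem_haddSet.2 ⟨x, hx, y, hy, hz⟩

theorem famSum_le_famSum_apply {f : R → R} (hf : IsHaddHom f)
    (hη : ∀ i a, η i a ≤ η i (f a)) (x : R) : famSum η x ≤ famSum η (f x) := by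
  refine famSum_le fun l hl hx => ?_
  let l' := l.map fun p => (p.1, f p.2)
  have hfx : f x ∈ hsumList (l'.map Prod.snd) := by
    rw [show l'.map Prod.snd = (l.map Prod.snd).map f by simp [l'], ← hf.image_hsumList]
    exact Set.mem_image_of_mem f hx
  calc ⨅ p ∈ l, η p.1 p.2 ≤ ⨅ p ∈ l, η p.1 (f p.2) := iInf₂_mono fun p _ => hη p.1 p.2
    _ = ⨅ p ∈ l', η p.1 p.2 := by rw [biInf_list_map]
    _ ≤ famSum η (f x) := biInf_le_famSum (by simpa [l'] using hl) hfx

theorem isFuzzyHyperideal_famSum (hη : ∀ i, IsFuzzyHyperideal (η i)) :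
    IsFuzzyHyperideal (famSum η) := by
  refine ⟨famSum_inf_le_hadd η, fun x y => sup_le ?_ ?_⟩
  · exact famSum_le_famSum_apply (isHaddHom_mul_right y)
      (fun i a => le_sup_left.trans ((hη i).2 a y)) x
  · exact famSum_le_famSum_apply (isHaddHom_mul_left x)
      (fun i a => le_sup_right.trans ((hη i).2 x a)) y

theorem famSum_le_iff {μ : R → unitInterval}
    (hμ : ∀ x y : R, μ x ⊓ μ y ≤ ⨅ z ∈ hadd x y, μ z) : famSum η ≤ μ ↔ ∀ i, η i ≤ μ := by
  refine ⟨fun h i => (le_famSum η i).trans h, fun h x => famSum_le fun l hl hx => ?_⟩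
  calc ⨅ p ∈ l, η p.1 p.2 ≤ ⨅ p ∈ l, μ p.2 := iInf₂_mono fun p _ => h p.1 p.2
    _ = ⨅ a ∈ l.map Prod.snd, μ a := (biInf_list_map _ _ l).symm
    _ ≤ μ x := biInf_le_of_mem_hsumList hμ (by simpa using hl) x hx

end famSum

end Semihyperring

open Semihyperring in
theorem iUnion_O_eq_O_famSum_general {R : Type*} [Semihyperring R] {ι : Type*}
    (η : ι → R → unitInterval)
    (hη : ∀ i, IsFuzzyHyperideal (η i)) :
    IsFuzzyHyperideal (famSum η) ∧ (⋃ i, O (η i)) = O (famSum η) := by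
  refine ⟨isFuzzyHyperideal_famSum hη, Set.ext fun μ => ?_⟩
  simp only [Set.mem_iUnion, O, Set.mem_ofPred_eq]
  constructor
  · rintro ⟨i, hμ, hi⟩
    exact ⟨hμ, fun h => hi ((le_famSum η i).trans h)⟩
  · rintro ⟨hμ, hnot⟩
    rw [famSum_le_iff hμ.1.1.1, not_forall] at hnot
    exact hnot.imp fun i hi => ⟨hμ, hi⟩

open Semihyperring in
/-- in a fully idempotent semihyperring, for an arbitrary family `{ηᵢ}` of
fuzzy hyperideals, `Σᵢ ηᵢ` is a fuzzy hyperideal and `⋃ᵢ O (ηᵢ) = O (Σᵢ ηᵢ)`. -/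
theorem iUnion_O_eq_O_famSum {R : Type*} [Semihyperring R] {ι : Type*}
    (h : FullyIdempotent R) (η : ι → R → unitInterval)
    (hη : ∀ i, IsFuzzyHyperideal (η i)) :
    IsFuzzyHyperideal (famSum η) ∧ (⋃ i, O (η i)) = O (famSum η) :=
  iUnion_O_eq_O_famSum_general η hη
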